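/- arXiv:2508.09594 — 3 statements merged into one kernel-verified Lean document; each statement's English description precedes it below -/
import Mathlib

section
/- For a monotone submodular set function f with f(∅) = 0, the greedy algorithm that for k steps adds the element with maximum marginal gain produces a set G_k with f(G_k) ≥ (1 − (1 − 1/k)^k)·f(OPT), where OPT is any set of size at most k; in particular f(G_k) ≥ (1 − 1/e)·f(OPT). -/
/-!
Let `OPT` have at most `k` elements. Monotonicity and submodularity bound the gap
`f OPT - f G` by the sum of the marginal gains of the elements of `OPT` at `G`, hence
by `k` times the greedy gain. Each greedy step therefore closes at least a `1/k`
fraction of the current gap, so after `k` steps the gap is at most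
`(1 - 1/k)^k f OPT ≤ e⁻¹ f OPT`.
-/

section Submodular

variable {E : Type*} [DecidableEq E] {f : Finset E → ℝ}

theorem sub_le_sum_marginal_gain
    (hsub : ∀ A B : Finset E, ∀ x, A ⊆ B → x ∉ B →
      f (insert x B) - f B ≤ f (insert x A) - f A)
    (A S : Finset E) :
    f (A ∪ S) - f A ≤ ∑ y ∈ S, (f (insert y A) - f A) := by
  induction S using Finset.induction_on with
  | empty => simp
  | insert y S hyS ih =>
    have hstep : f (A ∪ insert y S) - f (A ∪ S) ≤ f (insert y A) - f A := by
      rw [Finset.union_insert]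
      by_cases hyA : y ∈ A
      · simp [hyA]
      · exact hsub A (A ∪ S) y Finset.subset_union_left (by simp [hyA, hyS])
    rw [Finset.sum_insert hyS]
    linarith

theorem sub_le_card_mul_greedy_gain
    (hmono : ∀ A B : Finset E, A ⊆ B → f A ≤ f B)
    (hsub : ∀ A B : Finset E, ∀ x, A ⊆ B → x ∉ B →
      f (insert x B) - f B ≤ f (insert x A) - f A)
    {G : Finset E} {x : E} (hgreedy : ∀ y, f (insert y G) - f G ≤ f (insert x G) - f G)
    (OPT : Finset E) :
    f OPT - f G ≤ OPT.card * (f (insert x G) - f G) :=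
  calc f OPT - f G ≤ f (G ∪ OPT) - f G := by
        linarith [hmono _ _ (Finset.subset_union_right : OPT ⊆ G ∪ OPT)]
    _ ≤ ∑ y ∈ OPT, (f (insert y G) - f G) := sub_le_sum_marginal_gain hsub G OPT
    _ ≤ ∑ _y ∈ OPT, (f (insert x G) - f G) := Finset.sum_le_sum fun y _ => hgreedy y
    _ = OPT.card * (f (insert x G) - f G) := by rw [Finset.sum_const, nsmul_eq_mul]

end Submodular

theorem le_one_sub_inv_pow_mul_of_le_mul_sub {a : ℕ → ℝ} {c : ℝ} (hc : 1 ≤ c)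
    (h : ∀ t, a t ≤ c * (a t - a (t + 1))) (t : ℕ) :
    a t ≤ (1 - 1 / c) ^ t * a 0 := by
  have hc0 : 0 < c := by linarith
  have hq : 0 ≤ 1 - 1 / c := by
    rw [sub_nonneg, div_le_one hc0]
    exact hc
  induction t with
  | zero => simp
  | succ t ih =>
    have hstep : a (t + 1) ≤ (1 - 1 / c) * a t := by
      have := h t
      rw [one_sub_div hc0.ne', div_mul_eq_mul_div, le_div_iff₀ hc0]
      linarith
    calc a (t + 1) ≤ (1 - 1 / c) * a t := hstep
      _ ≤ (1 - 1 / c) * ((1 - 1 / c) ^ t * a 0) := mul_le_mul_of_nonneg_left ih hq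
      _ = (1 - 1 / c) ^ (t + 1) * a 0 := by ring

theorem greedy_submodular_approximation_general {E : Type*} [DecidableEq E]
    (f : Finset E → ℝ)
    (hmono : ∀ A B : Finset E, A ⊆ B → f A ≤ f B)
    (hsub : ∀ A B : Finset E, ∀ x, A ⊆ B → x ∉ B →
      f (insert x B) - f B ≤ f (insert x A) - f A)
    (hempty : f ∅ = 0)
    (k : ℕ) (hk : 0 < k)
    (G : ℕ → Finset E) (x : ℕ → E)
    (hG0 : G 0 = ∅)
    (hGsucc : ∀ t, G (t + 1) = insert (x t) (G t))
    (hgreedy : ∀ t, ∀ y : E, f (insert y (G t)) - f (G t) ≤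
      f (insert (x t) (G t)) - f (G t))
    (OPT : Finset E) (hOPT : OPT.card ≤ k) :
    (1 - (1 - 1 / (k : ℝ)) ^ k) * f OPT ≤ f (G k) ∧
    (1 - 1 / Real.exp 1) * f OPT ≤ f (G k) := by
  have hk1 : (1 : ℝ) ≤ k := by exact_mod_cast hk
  have hgap : ∀ t, f OPT - f (G t) ≤ k * ((f OPT - f (G t)) - (f OPT - f (G (t + 1)))) := by
    intro t
    have hgain : 0 ≤ f (G (t + 1)) - f (G t) := by
      linarith [hmono _ _ (hGsucc t ▸ Finset.subset_insert _ _ : G t ⊆ G (t + 1))]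
    calc f OPT - f (G t) ≤ OPT.card * (f (G (t + 1)) - f (G t)) :=
          hGsucc t ▸ sub_le_card_mul_greedy_gain hmono hsub (hgreedy t) OPT
      _ ≤ k * (f (G (t + 1)) - f (G t)) := by gcongr
      _ = k * ((f OPT - f (G t)) - (f OPT - f (G (t + 1)))) := by ring
  have hdecay := le_one_sub_inv_pow_mul_of_le_mul_sub hk1 hgap k
  rw [hG0, hempty, sub_zero] at hdecay
  have hOPT0 : 0 ≤ f OPT := hempty ▸ hmono ∅ OPT (Finset.empty_subset _)
  have hexp : (1 - 1 / (k : ℝ)) ^ k ≤ 1 / Real.exp 1 := by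
    rw [one_div (Real.exp 1), ← Real.exp_neg]
    exact Real.one_sub_div_pow_le_exp_neg hk1
  have hfirst : (1 - (1 - 1 / (k : ℝ)) ^ k) * f OPT ≤ f (G k) := by linarith
  refine ⟨hfirst, le_trans ?_ hfirst⟩
  gcongr

/-- The greedy algorithm for a monotone submodular function with `f(∅) = 0`
achieves a `1 - (1 - 1/k)^k ≥ 1 - 1/e` approximation of the optimum over sets
of size at most `k`. -/
theorem greedy_submodular_approximation {E : Type*} [DecidableEq E]
    (f : Finset E → ℝ) (hnn : ∀ A, 0 ≤ f A)
    (hmono : ∀ A B : Finset E, A ⊆ B → f A ≤ f B)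
    (hsub : ∀ A B : Finset E, ∀ x, A ⊆ B → x ∉ B →
      f (insert x B) - f B ≤ f (insert x A) - f A)
    (hempty : f ∅ = 0)
    (k : ℕ) (hk : 0 < k)
    (G : ℕ → Finset E) (x : ℕ → E)
    (hG0 : G 0 = ∅)
    (hGsucc : ∀ t, G (t + 1) = insert (x t) (G t))
    (hgreedy : ∀ t, ∀ y : E, f (insert y (G t)) - f (G t) ≤
      f (insert (x t) (G t)) - f (G t))
    (OPT : Finset E) (hOPT : OPT.card ≤ k) :
    (1 - (1 - 1 / (k : ℝ)) ^ k) * f OPT ≤ f (G k) ∧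
    (1 - 1 / Real.exp 1) * f OPT ≤ f (G k) :=
  greedy_submodular_approximation_general f hmono hsub hempty k hk G x hG0 hGsucc hgreedy OPT hOPT
end

section
/- If a real sequence satisfies a_{t+1} ≥ a_t + (OPT − a_t)/k for all t, with a_0 = 0, k ≥ 1, and OPT ≥ 0, then a_k ≥ (1 − (1 − 1/k)^k)·OPT. -/
/-- If `a_{t+1} ≥ a_t + (OPT − a_t)/k`, `a_0 = 0`, `k ≥ 1`, `OPT ≥ 0`, then
`a_k ≥ (1 − (1 − 1/k)^k)·OPT`. -/
theorem greedy_recurrence_bound (k : ℕ) (hk : 1 ≤ k) (OPT : ℝ) (hOPT : 0 ≤ OPT)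
    (a : ℕ → ℝ) (ha0 : a 0 = 0)
    (hrec : ∀ t, a t + (OPT - a t) / (k : ℝ) ≤ a (t + 1)) :
    (1 - (1 - 1 / (k : ℝ)) ^ k) * OPT ≤ a k := by
  have hk0 : (0:ℝ) < k := by exact_mod_cast hk
  have hkk : (0:ℝ) ≤ 1 - 1 / (k:ℝ) := by
    have : 1 / (k:ℝ) ≤ 1 := by
      rw [div_le_one hk0]; exact_mod_cast hk
    linarith
  have key : ∀ t, OPT - a t ≤ (1 - 1 / (k:ℝ)) ^ t * OPT := by
    intro t
    induction t with
    | zero => simp [ha0]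
    | succ n ih =>
      have h1 : OPT - a (n+1) ≤ (1 - 1 / (k:ℝ)) * (OPT - a n) := by
        have := hrec n
        have : (OPT - a n) / (k:ℝ) ≤ a (n+1) - a n := by linarith
        have h2 : (OPT - a n) / (k:ℝ) = (1 / (k:ℝ)) * (OPT - a n) := by ring
        nlinarith [this]
      calc OPT - a (n+1) ≤ (1 - 1 / (k:ℝ)) * (OPT - a n) := h1
        _ ≤ (1 - 1 / (k:ℝ)) * ((1 - 1 / (k:ℝ)) ^ n * OPT) :=
            mul_le_mul_of_nonneg_left ih hkk
        _ = (1 - 1 / (k:ℝ)) ^ (n+1) * OPT := by ring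
  have := key k
  linarith
end

section
/- In the weighted set cover setting with unit costs, the greedy algorithm that repeatedly picks the set covering the most uncovered elements returns a cover of size at most H_n · OPT ≤ (1 + ln n) · OPT, where n is the size of the universe, H_n the n-th harmonic number, and OPT the minimum cover size. -/
/-- The greedy algorithm for (unit-cost) set cover returns a cover of size at
most `H_n · OPT ≤ (1 + ln n) · OPT`, where `n = |X|` is the size of the
universe and `OPT` the minimum cover size. Here the greedy run is modeled by
the sequence `T 0, …, T (m-1)` of chosen sets: each chosen set covers the
maximum number of still-uncovered elements, the algorithm stops exactly when
`X` is covered, and `OPT` is realized by some optimal cover. -/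
theorem greedy_set_cover_harmonic_bound {α : Type*} [DecidableEq α]
    (X : Finset α) (F : Finset (Finset α)) (n : ℕ) (hn : X.card = n)
    (OPT : ℕ)
    (hOPTcover : ∃ C ⊆ F, C.card = OPT ∧ ∀ x ∈ X, ∃ S ∈ C, x ∈ S)
    (hOPTmin : ∀ C ⊆ F, (∀ x ∈ X, ∃ S ∈ C, x ∈ S) → OPT ≤ C.card)
    (T : ℕ → Finset α) (m : ℕ)
    (hTmem : ∀ t < m, T t ∈ F)
    (hgreedy : ∀ t < m, ∀ S ∈ F,
      (S ∩ (X \ (Finset.range t).biUnion T)).card ≤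
        (T t ∩ (X \ (Finset.range t).biUnion T)).card)
    (hdone : ∀ x ∈ X, ∃ t < m, x ∈ T t)
    (hstop : ∀ t < m, ¬ (∀ x ∈ X, ∃ i < t, x ∈ T i)) :
    (m : ℝ) ≤ (∑ i ∈ Finset.range n, 1 / ((i : ℝ) + 1)) * OPT ∧
    (m : ℝ) ≤ (1 + Real.log n) * OPT := by
  classical
  set U : ℕ → Finset α := fun t => X \ (Finset.range t).biUnion T with hUdef
  set u : ℕ → ℕ := fun t => (U t).card with hudef
  -- basic facts
  have hU0 : u 0 = n := by simp [hudef, hUdef, hn]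
  have hUsucc : ∀ t, U (t + 1) = U t \ T t := by
    intro t
    ext x
    simp only [hUdef, Finset.mem_sdiff, Finset.mem_biUnion, Finset.mem_range,
      Nat.lt_succ_iff_lt_or_eq]
    constructor
    · rintro ⟨hx, hnot⟩
      exact ⟨⟨hx, fun ⟨i, hi, hxi⟩ => hnot ⟨i, Or.inl hi, hxi⟩⟩,
        fun hxt => hnot ⟨t, Or.inr rfl, hxt⟩⟩
    · rintro ⟨⟨hx, hnot⟩, hxt⟩
      refine ⟨hx, fun ⟨i, hi, hxi⟩ => ?_⟩
      rcases hi with h' | h'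
      · exact hnot ⟨i, h', hxi⟩
      · exact hxt (h' ▸ hxi)
  have hUm : u m = 0 := by
    rw [hudef]
    simp only
    rw [Finset.card_eq_zero]
    ext x
    simp only [hUdef, Finset.mem_sdiff, Finset.mem_biUnion, Finset.mem_range,
      Finset.notMem_empty, iff_false, not_and, not_not]
    intro hx
    exact hdone x hx
  have hUpos : ∀ t < m, 0 < u t := by
    intro t ht
    have hs := hstop t ht
    push_neg at hs
    obtain ⟨x, hxX, hxT⟩ := hs
    refine Finset.card_pos.mpr ⟨x, ?_⟩
    simp only [hUdef, Finset.mem_sdiff, Finset.mem_biUnion, Finset.mem_range]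
    exact ⟨hxX, fun ⟨i, hi, hxi⟩ => hxT i hi hxi⟩
  -- newly covered count
  have hc : ∀ t, u (t + 1) + (T t ∩ U t).card = u t := by
    intro t
    have h1 := Finset.card_sdiff_add_card_inter (U t) (T t)
    rw [hudef]
    simp only
    rw [hUsucc t, Finset.inter_comm (T t) (U t)]
    exact h1
  -- key greedy bound: u t ≤ OPT * c t
  have key : ∀ t < m, u t ≤ OPT * (T t ∩ U t).card := by
    intro t ht
    obtain ⟨C, hCF, hCcard, hCcov⟩ := hOPTcover
    calc u t ≤ (C.biUnion fun S => S ∩ U t).card := by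
          apply Finset.card_le_card
          intro x hx
          have hxX : x ∈ X := (Finset.mem_sdiff.mp hx).1
          obtain ⟨S, hS, hxS⟩ := hCcov x hxX
          exact Finset.mem_biUnion.mpr ⟨S, hS, Finset.mem_inter.mpr ⟨hxS, hx⟩⟩
      _ ≤ ∑ S ∈ C, (S ∩ U t).card := Finset.card_biUnion_le
      _ ≤ ∑ S ∈ C, (T t ∩ U t).card :=
          Finset.sum_le_sum fun S hS => hgreedy t ht S (hCF hS)
      _ = OPT * (T t ∩ U t).card := by rw [Finset.sum_const, smul_eq_mul, hCcard]
  -- harmonic function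
  set h : ℕ → ℝ := fun k => ∑ i ∈ Finset.range k, 1 / ((i : ℝ) + 1) with hhdef
  -- per-step bound
  have step : ∀ t < m, (1 : ℝ) ≤ (OPT : ℝ) * (h (u t) - h (u (t + 1))) := by
    intro t ht
    have hct := hc t
    have hle : u (t + 1) ≤ u t := by omega
    have hb0 : 0 < u t := hUpos t ht
    have hbR : (0 : ℝ) < (u t : ℝ) := by exact_mod_cast hb0
    have hcard : (T t ∩ U t).card = u t - u (t + 1) := by omega
    have hkey : u t ≤ OPT * (u t - u (t + 1)) := by
      rw [← hcard]; exact key t ht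
    have hdiff : h (u t) - h (u (t + 1)) =
        ∑ i ∈ Finset.Ico (u (t + 1)) (u t), 1 / ((i : ℝ) + 1) := by
      rw [hhdef]
      simp only
      rw [Finset.sum_Ico_eq_sub _ hle]
    have hlb : ((u t - u (t + 1) : ℕ) : ℝ) / (u t : ℝ) ≤ h (u t) - h (u (t + 1)) := by
      rw [hdiff, ← Nat.card_Ico (u (t + 1)) (u t)]
      calc ((Finset.Ico (u (t + 1)) (u t)).card : ℝ) / (u t : ℝ)
          = ∑ _i ∈ Finset.Ico (u (t + 1)) (u t), 1 / (u t : ℝ) := by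
            rw [Finset.sum_const, nsmul_eq_mul]; ring
        _ ≤ ∑ i ∈ Finset.Ico (u (t + 1)) (u t), 1 / ((i : ℝ) + 1) := by
            apply Finset.sum_le_sum
            intro i hi
            have hi2 : (i : ℝ) + 1 ≤ (u t : ℝ) := by
              exact_mod_cast Nat.succ_le_of_lt (Finset.mem_Ico.mp hi).2
            exact one_div_le_one_div_of_le (by positivity) hi2
    calc (1 : ℝ) = (u t : ℝ) / (u t : ℝ) := (div_self hbR.ne').symm
      _ ≤ ((OPT * (u t - u (t + 1)) : ℕ) : ℝ) / (u t : ℝ) := by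
          have : (u t : ℝ) ≤ ((OPT * (u t - u (t + 1)) : ℕ) : ℝ) := by
            exact_mod_cast hkey
          gcongr
      _ = (OPT : ℝ) * (((u t - u (t + 1) : ℕ) : ℝ) / (u t : ℝ)) := by
          push_cast; ring
      _ ≤ (OPT : ℝ) * (h (u t) - h (u (t + 1))) := by
          apply mul_le_mul_of_nonneg_left hlb (by positivity)
  -- main summation
  have hsum : (m : ℝ) ≤ (OPT : ℝ) * h n := by
    calc (m : ℝ) = ∑ _t ∈ Finset.range m, (1 : ℝ) := by simp
      _ ≤ ∑ t ∈ Finset.range m, (OPT : ℝ) * (h (u t) - h (u (t + 1))) :=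
          Finset.sum_le_sum fun t ht => step t (Finset.mem_range.mp ht)
      _ = (OPT : ℝ) * ∑ t ∈ Finset.range m, (h (u t) - h (u (t + 1))) := by
          rw [Finset.mul_sum]
      _ = (OPT : ℝ) * (h (u 0) - h (u m)) := by
          rw [Finset.sum_range_sub' (fun t => h (u t))]
      _ = (OPT : ℝ) * h n := by rw [hU0, hUm]; simp [hhdef]
  have hharm : h n ≤ 1 + Real.log n := by
    have hb := harmonic_le_one_add_log n
    have heq : h n = (harmonic n : ℝ) := by
      rw [hhdef, harmonic]
      push_cast
      simp [one_div]
    rw [heq]; exact hb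
  constructor
  · rw [mul_comm]; exact hsum
  · calc (m : ℝ) ≤ (OPT : ℝ) * h n := hsum
      _ ≤ (OPT : ℝ) * (1 + Real.log n) :=
          mul_le_mul_of_nonneg_left hharm (by positivity)
      _ = (1 + Real.log n) * OPT := by ring
end
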